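/- For all n ≥ 1 and k ≥ 1, the number of partial zigzag knight's paths of length 2n that end at height k with their last step being a down-step (i.e., a step (1,-2) or (2,-1)) equals ((k+1)/(n+1))·binom(2n+2, n−k). -/

import Mathlib

open List

/-- The four right-moves of a knight. -/
def KnightSteps : Set (ℤ × ℤ) := {(2,1), (2,-1), (1,2), (1,-2)}

/-- All partial sums of the y-coordinates are nonnegative (the path stays in ℕ²). -/
def NonnegHeights (p : List (ℤ × ℤ)) : Prop :=
  ∀ i, 0 ≤ ((p.take i).map Prod.snd).sum

/-- A partial knight's path: steps from `KnightSteps`, never going below the x-axis. -/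
def IsPartialKnight (p : List (ℤ × ℤ)) : Prop :=
  (∀ s ∈ p, s ∈ KnightSteps) ∧ NonnegHeights p

/-- Any two consecutive steps have vertical components of opposite sign. -/
def IsZigzag (p : List (ℤ × ℤ)) : Prop :=
  List.Chain' (fun a b => a.2 * b.2 < 0) p

/-- A partial zigzag knight's path. -/
def IsPartialZigzag (p : List (ℤ × ℤ)) : Prop :=
  IsPartialKnight p ∧ IsZigzag p

/-- The height of the endpoint of a path. -/
def pathHeight (p : List (ℤ × ℤ)) : ℤ := (p.map Prod.snd).sum

/-- The size (x-coordinate of the endpoint) of a path. -/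
def pathSize (p : List (ℤ × ℤ)) : ℤ := (p.map Prod.fst).sum

/-- A zigzag knight's path ending on the x-axis. -/
def IsZigzagKnightPath (p : List (ℤ × ℤ)) : Prop :=
  IsPartialZigzag p ∧ pathHeight p = 0

/-- The last step of `p` exists and is an up-step. -/
def EndsWithUp (p : List (ℤ × ℤ)) : Prop :=
  ∃ s, p.getLast? = some s ∧ 0 < s.2

/-- The last step of `p` exists and is a down-step. -/
def EndsWithDown (p : List (ℤ × ℤ)) : Prop :=
  ∃ s, p.getLast? = some s ∧ s.2 < 0

def Estep : ℤ × ℤ := (2, 1)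
def Ebar  : ℤ × ℤ := (2, -1)
def Nstep : ℤ × ℤ := (1, 2)
def Nbar  : ℤ × ℤ := (1, -2)

/-- `ichoose m j` is `choose m j` for `j ≥ 0` and `0` for negative `j`. -/
def ichoose (m : ℕ) (j : ℤ) : ℕ := if 0 ≤ j then m.choose j.toNat else 0

/-!
A partial zigzag path of even length starts with an up-step and alternates, so it is a sequence
of (up, down) pairs. Each pair changes the height by `-1`, `0`, `0` or `+1`, and the path stays in
`ℕ²` iff the height after each pair is nonnegative. Hence the number `c m h` of such paths with
`2m` steps ending at height `h` satisfies `c (m+1) h = c m (h-1) + 2 c m h + c m (h+1)` for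
`h ≥ 0` and `c m (-1) = 0`; the ballot numbers `C(2m+1, m-h) - C(2m+1, m-h-1)` satisfy the same
recursion and boundary condition, and
`(n+1) (C(2n+1, n-k) - C(2n+1, n-k-1)) = (k+1) C(2n+2, n-k)`.
-/
def upSteps : Finset (ℤ × ℤ) := {(2, 1), (1, 2)}

def downSteps : Finset (ℤ × ℤ) := {(2, -1), (1, -2)}

lemma mem_upSteps_iff {s : ℤ × ℤ} : s ∈ upSteps ↔ s ∈ KnightSteps ∧ 0 < s.2 := by
  obtain ⟨a, b⟩ := s
  simp only [upSteps, KnightSteps, Finset.mem_insert, Finset.mem_singleton, Set.mem_insert_iff,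
    Set.mem_singleton_iff, Prod.mk.injEq]
  omega

lemma mem_downSteps_iff {s : ℤ × ℤ} : s ∈ downSteps ↔ s ∈ KnightSteps ∧ s.2 < 0 := by
  obtain ⟨a, b⟩ := s
  simp only [downSteps, KnightSteps, Finset.mem_insert, Finset.mem_singleton, Set.mem_insert_iff,
    Set.mem_singleton_iff, Prod.mk.injEq]
  omega

lemma snd_ne_zero_of_mem_knightSteps {s : ℤ × ℤ} (hs : s ∈ KnightSteps) : s.2 ≠ 0 := by
  rcases hs with rfl | rfl | rfl | rfl <;> decide

lemma pathHeight_append (p q : List (ℤ × ℤ)) :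
    pathHeight (p ++ q) = pathHeight p + pathHeight q := by
  simp [pathHeight]

@[simp]
lemma pathHeight_nil : pathHeight [] = 0 := rfl

@[simp]
lemma pathHeight_cons (s : ℤ × ℤ) (p : List (ℤ × ℤ)) :
    pathHeight (s :: p) = s.2 + pathHeight p := by
  simp [pathHeight]

lemma pathHeight_singleton (s : ℤ × ℤ) : pathHeight [s] = s.2 := by
  simp

lemma NonnegHeights.pathHeight_nonneg {p : List (ℤ × ℤ)} (hp : NonnegHeights p) :
    0 ≤ pathHeight p := by
  simpa [pathHeight] using hp p.length

lemma nonnegHeights_append_singleton {p : List (ℤ × ℤ)} {s : ℤ × ℤ} :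
    NonnegHeights (p ++ [s]) ↔ NonnegHeights p ∧ 0 ≤ pathHeight p + s.2 := by
  constructor
  · intro hps
    refine ⟨fun i => ?_, by simpa [pathHeight_append, pathHeight_singleton] using
      (hps (p.length + 1)).trans_eq (by simp [pathHeight])⟩
    rcases le_total i p.length with hi | hi
    · simpa [List.take_append_of_le_length hi] using hps i
    · simpa [List.take_of_length_le hi] using hps p.length
  · rintro ⟨hp, hs⟩ i
    rcases le_total i p.length with hi | hi
    · simpa [List.take_append_of_le_length hi] using hp i
    · obtain ⟨j, rfl⟩ := Nat.exists_eq_add_of_le hi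
      rw [List.take_append, List.take_of_length_le hi, Nat.add_sub_cancel_left]
      rcases j with _ | j
      · simpa [pathHeight] using hp.pathHeight_nonneg
      · simpa [pathHeight] using hs

lemma IsZigzag.sign_getLast {a : ℤ × ℤ} {l : List (ℤ × ℤ)} (ha : a.2 ≠ 0)
    (h : IsZigzag (a :: l)) :
    0 < (-1) ^ l.length * (a.2 * ((a :: l).getLast (cons_ne_nil a l)).2) := by
  induction l generalizing a with
  | nil => simpa using mul_self_pos.2 ha
  | cons b t ih =>
    obtain ⟨hab, hbt⟩ := isChain_cons_cons.1 h
    have hb := ih (right_ne_zero_of_mul hab.ne) hbt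
    rw [getLast_cons_cons, length_cons, pow_succ]
    generalize ((b :: t).getLast _).2 = z at hb ⊢
    generalize (-1 : ℤ) ^ t.length = σ at hb ⊢
    nlinarith [mul_neg_of_neg_of_pos hab hb, sq_nonneg b.2]

lemma IsPartialZigzag.snd_getLast_neg {p : List (ℤ × ℤ)} (hp : IsPartialZigzag p)
    (heven : Even p.length) : ∀ z ∈ p.getLast?, z.2 < 0 := by
  obtain ⟨⟨hsteps, hnn⟩, hzz⟩ := hp
  rcases p with _ | ⟨a, l⟩
  · simp
  intro z hz
  rw [getLast?_eq_some_getLast (cons_ne_nil a l), Option.mem_some_iff] at hz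
  subst hz
  have ha : a.2 ≠ 0 := snd_ne_zero_of_mem_knightSteps (hsteps a mem_cons_self)
  have ha_pos : 0 < a.2 := lt_of_le_of_ne (by simpa using hnn 1) ha.symm
  have hsign := hzz.sign_getLast ha
  have hodd : Odd l.length := by simpa [Nat.even_add_one] using heven
  rw [hodd.neg_one_pow] at hsign
  nlinarith

lemma IsPartialZigzag.endsWithDown {p : List (ℤ × ℤ)} (hp : IsPartialZigzag p) (hne : p ≠ [])
    (heven : Even p.length) : EndsWithDown p :=
  ⟨p.getLast hne, getLast?_eq_some_getLast hne,
    hp.snd_getLast_neg heven _ (getLast?_eq_some_getLast hne)⟩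

lemma isPartialZigzag_append_pair_iff {q : List (ℤ × ℤ)} {u d : ℤ × ℤ}
    (heven : Even q.length) :
    IsPartialZigzag (q ++ [u, d]) ↔
      IsPartialZigzag q ∧ u ∈ upSteps ∧ d ∈ downSteps ∧ 0 ≤ pathHeight q + u.2 + d.2 := by
  have hsteps_iff : (∀ s ∈ q ++ [u, d], s ∈ KnightSteps) ↔
      (∀ s ∈ q, s ∈ KnightSteps) ∧ u ∈ KnightSteps ∧ d ∈ KnightSteps := by
    simp only [forall_mem_append, forall_mem_cons, not_mem_nil, IsEmpty.forall_iff, implies_true,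
      and_true]
  have hnn_iff : NonnegHeights (q ++ [u, d]) ↔
      (NonnegHeights q ∧ 0 ≤ pathHeight q + u.2) ∧ 0 ≤ pathHeight q + u.2 + d.2 := by
    rw [show q ++ [u, d] = q ++ [u] ++ [d] by simp, nonnegHeights_append_singleton,
      nonnegHeights_append_singleton, pathHeight_append, pathHeight_singleton]
  have hzz_iff : IsZigzag (q ++ [u, d]) ↔
      IsZigzag q ∧ u.2 * d.2 < 0 ∧ ∀ z ∈ q.getLast?, z.2 * u.2 < 0 := by
    change List.IsChain _ _ ↔ List.IsChain _ _ ∧ _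
    simp only [isChain_append, isChain_pair, head?_cons, Option.mem_some_iff, forall_eq']
  simp only [IsPartialZigzag, IsPartialKnight, hsteps_iff, hnn_iff, hzz_iff, mem_upSteps_iff,
    mem_downSteps_iff]
  constructor
  · rintro ⟨⟨⟨hsteps, hu, hd⟩, ⟨hnn, hu0⟩, hd0⟩, hzz, hud, hlast⟩
    have hq : IsPartialZigzag q := ⟨⟨hsteps, hnn⟩, hzz⟩
    have hu_pos : 0 < u.2 := by
      cases hz : q.getLast? with
      | none =>
        rw [getLast?_eq_none_iff.1 hz] at hu0
        exact lt_of_le_of_ne (by simpa [pathHeight] using hu0)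
          (snd_ne_zero_of_mem_knightSteps hu).symm
      | some z => exact pos_of_mul_neg_right (hlast z hz) (hq.snd_getLast_neg heven z hz).le
    exact ⟨hq, ⟨hu, hu_pos⟩, ⟨hd, neg_of_mul_neg_right hud hu_pos.le⟩, hd0⟩
  · rintro ⟨⟨⟨hsteps, hnn⟩, hzz⟩, ⟨hu, hu_pos⟩, ⟨hd, hd_neg⟩, hh⟩
    have hq : IsPartialZigzag q := ⟨⟨hsteps, hnn⟩, hzz⟩
    refine ⟨⟨⟨hsteps, hu, hd⟩, ⟨hnn, by linarith [hnn.pathHeight_nonneg]⟩, hh⟩, hzz,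
      mul_neg_of_pos_of_neg hu_pos hd_neg, fun z hz => ?_⟩
    exact mul_neg_of_neg_of_pos (hq.snd_getLast_neg heven z hz) hu_pos

lemma List.finite_length_eq_of_forall_mem {α : Type*} {S : Set α} (hS : S.Finite) (n : ℕ) :
    {l : List α | l.length = n ∧ ∀ x ∈ l, x ∈ S}.Finite := by
  have := hS.to_subtype
  refine ((List.finite_length_eq S n).image (List.map Subtype.val)).subset ?_
  rintro l ⟨hl, hlS⟩
  exact ⟨l.attachWith (· ∈ S) hlS, by simpa using hl, by simp⟩

lemma knightSteps_finite : KnightSteps.Finite := by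
  simp [KnightSteps]

def zigzagPaths (m : ℕ) (h : ℤ) : Set (List (ℤ × ℤ)) :=
  {p | IsPartialZigzag p ∧ p.length = 2 * m ∧ pathHeight p = h}

lemma zigzagPaths_finite (m : ℕ) (h : ℤ) : (zigzagPaths m h).Finite :=
  (List.finite_length_eq_of_forall_mem knightSteps_finite (2 * m)).subset
    fun _ hp => ⟨hp.2.1, hp.1.1.1⟩

lemma zigzagPaths_eq_empty_of_neg (m : ℕ) {h : ℤ} (hh : h < 0) : zigzagPaths m h = ∅ :=
  Set.eq_empty_of_forall_notMem fun _ hp =>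
    hh.not_ge (hp.2.2 ▸ hp.1.1.2.pathHeight_nonneg)

lemma zigzagPaths_zero (h : ℤ) : zigzagPaths 0 h = if h = 0 then {[]} else ∅ := by
  ext p
  simp only [zigzagPaths, Set.mem_ofPred_eq, mul_zero, length_eq_zero_iff]
  split_ifs with h0
  · subst h0
    constructor
    · exact fun hp => hp.2.1
    · rintro rfl
      exact ⟨⟨⟨by simp, fun i => by simp⟩, isChain_nil⟩, rfl, rfl⟩
  · simp only [Set.mem_empty_iff_false, iff_false, not_and]
    rintro - rfl
    exact Ne.symm h0

lemma append_pair_mem_zigzagPaths_succ_iff {m : ℕ} {h : ℤ} {q : List (ℤ × ℤ)} {u d : ℤ × ℤ}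
    (hu : u ∈ upSteps) (hd : d ∈ downSteps) (hh : 0 ≤ h) :
    q ++ [u, d] ∈ zigzagPaths (m + 1) h ↔ q ∈ zigzagPaths m (h - u.2 - d.2) := by
  simp only [zigzagPaths, Set.mem_ofPred_eq, length_append, length_cons, length_nil,
    pathHeight_append, pathHeight_cons, pathHeight_nil]
  constructor
  · rintro ⟨hp, hlen, hheight⟩
    exact ⟨((isPartialZigzag_append_pair_iff ⟨m, by omega⟩).1 hp).1, by omega, by linarith⟩
  · rintro ⟨hq, hlen, hheight⟩
    exact ⟨(isPartialZigzag_append_pair_iff ⟨m, by omega⟩).2 ⟨hq, hu, hd, by linarith⟩,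
      by omega, by linarith⟩

lemma exists_append_pair_of_mem_zigzagPaths_succ {m : ℕ} {h : ℤ} {p : List (ℤ × ℤ)}
    (hp : p ∈ zigzagPaths (m + 1) h) :
    ∃ q, ∃ s ∈ upSteps ×ˢ downSteps, p = q ++ [s.1, s.2] := by
  obtain ⟨hp, hlen, -⟩ := hp
  obtain rfl | ⟨r, d, rfl⟩ := p.eq_nil_or_concat'
  · simp at hlen
  obtain rfl | ⟨q, u, rfl⟩ := r.eq_nil_or_concat'
  · simp at hlen
    omega
  rw [append_assoc, singleton_append] at hp hlen
  obtain ⟨-, hu, hd, -⟩ := (isPartialZigzag_append_pair_iff ⟨m, by simp at hlen; omega⟩).1 hp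
  exact ⟨q, (u, d), Finset.mem_product.2 ⟨hu, hd⟩, by simp⟩

lemma card_zigzagPaths_succ_eq_sum (m : ℕ) {h : ℤ} (hh : 0 ≤ h) :
    Nat.card (zigzagPaths (m + 1) h) =
      ∑ s ∈ upSteps ×ˢ downSteps, Nat.card (zigzagPaths m (h - s.1.2 - s.2.2)) := by
  have := fun h' => (zigzagPaths_finite m h').to_subtype
  rw [← Finset.sum_coe_sort, ← Nat.card_sigma]
  symm
  refine Nat.card_eq_of_bijective
    (fun x => ⟨x.2.1 ++ [x.1.1.1, x.1.1.2], ?_⟩) ⟨fun x y hxy => ?_, fun p => ?_⟩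
  · have hs := Finset.mem_product.1 x.1.2
    exact (append_pair_mem_zigzagPaths_succ_iff hs.1 hs.2 hh).2 x.2.2
  · obtain ⟨hq, hs⟩ := append_inj (congrArg Subtype.val hxy) (x.2.2.2.1.trans y.2.2.2.1.symm)
    simp only [cons.injEq, and_true] at hs
    exact Sigma.subtype_ext (Subtype.ext (Prod.ext hs.1 hs.2)) hq
  · obtain ⟨p, hp⟩ := p
    obtain ⟨q, s, hs, rfl⟩ := exists_append_pair_of_mem_zigzagPaths_succ hp
    have hs' := Finset.mem_product.1 hs
    exact ⟨⟨⟨s, hs⟩, ⟨q, (append_pair_mem_zigzagPaths_succ_iff hs'.1 hs'.2 hh).1 hp⟩⟩, rfl⟩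

lemma card_zigzagPaths_succ (m : ℕ) {h : ℤ} (hh : 0 ≤ h) :
    Nat.card (zigzagPaths (m + 1) h) = Nat.card (zigzagPaths m (h - 1)) +
      2 * Nat.card (zigzagPaths m h) + Nat.card (zigzagPaths m (h + 1)) := by
  rw [card_zigzagPaths_succ_eq_sum m hh, upSteps, downSteps, Finset.sum_product,
    Finset.sum_pair (by decide), Finset.sum_pair (by decide), Finset.sum_pair (by decide)]
  simp only
  rw [show h - 1 - -1 = h by ring, show h - 1 - -2 = h + 1 by ring,
    show h - 2 - -1 = h - 1 by ring, show h - 2 - -2 = h by ring]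
  ring

lemma ichoose_of_neg {N : ℕ} {j : ℤ} (hj : j < 0) : ichoose N j = 0 :=
  if_neg hj.not_ge

@[simp]
lemma ichoose_natCast (N i : ℕ) : ichoose N i = N.choose i := by
  simp [ichoose]

lemma ichoose_succ (N : ℕ) (j : ℤ) : ichoose (N + 1) j = ichoose N j + ichoose N (j - 1) := by
  rcases lt_or_ge j 0 with hj | hj
  · simp [ichoose_of_neg, hj, show j - 1 < 0 by omega]
  obtain ⟨i, rfl⟩ := Int.eq_ofNat_of_zero_le hj
  rcases i with _ | i
  · simp [ichoose]
  · rw [show ((i + 1 : ℕ) : ℤ) - 1 = i by push_cast; ring, ichoose_natCast, ichoose_natCast,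
      ichoose_natCast, Nat.choose_succ_succ', add_comm]

def ballot (N : ℕ) (j : ℤ) : ℤ := ichoose N j - ichoose N (j - 1)

lemma ballot_add_two (N : ℕ) (j : ℤ) :
    ballot (N + 2) j = ballot N j + 2 * ballot N (j - 1) + ballot N (j - 2) := by
  simp only [ballot, ichoose_succ, Nat.cast_add]
  rw [show j - 1 - 1 = j - 2 by ring, show j - 2 - 1 = j - 1 - 2 by ring]
  ring

lemma ballot_odd_succ (m : ℕ) : ballot (2 * m + 1) (m + 1) = 0 := by
  rw [ballot, add_sub_cancel_right, ← Nat.cast_succ, ichoose_natCast, ichoose_natCast,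
    Nat.choose_symm_half, sub_self]

lemma mul_ballot (N : ℕ) (j : ℤ) :
    (N + 1) * ballot N j = (N + 1 - 2 * j) * ichoose (N + 1) j := by
  rcases lt_or_ge j 0 with hj | hj
  · simp [ballot, ichoose_of_neg, hj, show j - 1 < 0 by omega]
  obtain ⟨i, rfl⟩ := Int.eq_ofNat_of_zero_le hj
  rcases i with _ | i
  · simp [ballot, ichoose]
  rw [ballot, show ((i + 1 : ℕ) : ℤ) - 1 = i by push_cast; ring, ichoose_natCast,
    ichoose_natCast, ichoose_natCast, Nat.choose_succ_succ']
  have key := Nat.choose_succ_right_eq N i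
  rcases le_or_gt i N with hi | hi
  · have : ((N.choose (i + 1) * (i + 1) : ℕ) : ℤ) = N.choose i * (N - i) := by
      rw [key]; push_cast [hi]; ring
    push_cast at this ⊢
    linear_combination 2 * this
  · simp [Nat.choose_eq_zero_of_lt hi, Nat.choose_eq_zero_of_lt (show N < i + 1 by omega)]

lemma card_zigzagPaths (m : ℕ) {h : ℤ} (hh : -1 ≤ h) :
    (Nat.card (zigzagPaths m h) : ℤ) = ballot (2 * m + 1) (m - h) := by
  induction m generalizing h with
  | zero =>
    rw [zigzagPaths_zero]
    split_ifs with h0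
    · simp [h0, ballot, ichoose]
    · obtain rfl | hpos : h = -1 ∨ 0 < h := by omega
      · simp [ballot, ichoose]
      · simp [ballot, ichoose_of_neg, hpos, show -h - 1 < 0 by omega]
  | succ m ih =>
    obtain rfl | hh := eq_or_lt_of_le hh
    · rw [zigzagPaths_eq_empty_of_neg _ (by norm_num), Nat.card_of_isEmpty, Nat.cast_zero,
        sub_neg_eq_add, ballot_odd_succ]
    rw [card_zigzagPaths_succ m (by omega)]
    push_cast
    rw [ih (by omega), ih (by omega), ih (by omega),
      show 2 * (m + 1) + 1 = 2 * m + 1 + 2 by ring, ballot_add_two]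
    ring_nf

theorem stmt4_general (n k : ℕ) (hn : 1 ≤ n) :
    (Nat.card {p : List (ℤ × ℤ) //
        IsPartialZigzag p ∧ p.length = 2 * n ∧ pathHeight p = k ∧ EndsWithDown p} : ℚ)
      = ((k + 1 : ℚ) / (n + 1)) * (ichoose (2 * n + 2) ((n : ℤ) - k) : ℚ) := by
  have hpaths : {p : List (ℤ × ℤ) |
      IsPartialZigzag p ∧ p.length = 2 * n ∧ pathHeight p = k ∧ EndsWithDown p} =
      zigzagPaths n k := by
    ext p
    refine ⟨fun hp => ⟨hp.1, hp.2.1, hp.2.2.1⟩, fun ⟨hp, hlen, hk⟩ => ⟨hp, hlen, hk, ?_⟩⟩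
    exact hp.endsWithDown (ne_nil_of_length_pos (by omega)) ⟨n, by omega⟩
  have hcard := card_zigzagPaths n (h := k) (by omega)
  have hballot := mul_ballot (2 * n + 1) (n - k)
  have hZ : ((n : ℤ) + 1) * Nat.card (zigzagPaths n k) =
      (k + 1) * ichoose (2 * n + 2) (n - k) := by
    rw [hcard]
    push_cast at hballot
    linarith
  rw [← Set.coe_ofPred, hpaths, div_mul_eq_mul_div, eq_div_iff (by positivity)]
  exact_mod_cast (mul_comm _ _).trans hZ

/-- partial zigzag knight's paths of length 2n ending at height k
with a down last step are counted by ((k+1)/(n+1))·binom(2n+2, n−k). -/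
theorem stmt4 (n k : ℕ) (hn : 1 ≤ n) (hk : 1 ≤ k) :
    (Nat.card {p : List (ℤ × ℤ) //
        IsPartialZigzag p ∧ p.length = 2 * n ∧ pathHeight p = k ∧ EndsWithDown p} : ℚ)
      = ((k + 1 : ℚ) / (n + 1)) * (ichoose (2 * n + 2) ((n : ℤ) - k) : ℚ) :=
  stmt4_general n k hn
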